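/- Assume there exists a finite-rank strong subgroup X₀ of K^×. Then for every finite subset S of K^× the set {δ(W) : W a finite-rank subgroup of K^× with X₀ ∪ S ⊆ W} ⊆ ℤ attains a minimum, denoted d(S). Moreover, for all finite subsets X, Y, Z of K^×: if d(X ∪ Y) = d(Y), then d(X ∪ Y ∪ Z) = d(Y ∪ Z). (The dimension function associated to the predimension δ satisfies the exchange-type closure axiom.) -/

import Mathlib

/-!
The predimension `δ = 2·td − rk(· ∩ G)` is submodular on finite-rank subgroups. Indeed `td` is
the rank function of the matroid of algebraic independence over `ℚ`, and its value at `W ⊔ V`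
is its value at `W ∪ V` (elements of `W ⊔ V` are products `w v`); `rk(· ∩ G)` is supermodular by
the modular law for ranks of submodules. All values are finite since `td ≤ rk`: algebraically
independent units are multiplicatively independent.

A strong `X₀` bounds `δ` below over `X₀`, so the minima `d(S)` exist. If `W` realises `d(X ∪ Y)`
and `V` realises `d(Y ∪ Z)`, then
`d(X ∪ Y ∪ Z) ≤ δ(W ⊔ V) ≤ δ W + δ V − δ(W ⊓ V) ≤ d(X ∪ Y) + d(Y ∪ Z) − d(Y) = d(Y ∪ Z)`,
and the reverse inequality is monotonicity of `d`.
-/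

noncomputable section

namespace GreenPoints

variable {K : Type*} [Field K] [CharZero K]

/-- The rank of a (multiplicative) subgroup of `Kˣ`: the ℤ-module rank of the
underlying abelian group, i.e. the dimension over ℚ of `S ⊗ ℚ`. -/
def grpRank (S : Subgroup Kˣ) : Cardinal := Module.rank ℤ (Additive S)

/-- A subgroup of `Kˣ` has finite rank. -/
def FiniteRank (S : Subgroup Kˣ) : Prop := grpRank S < Cardinal.aleph0

/-- The transcendence degree over ℚ of the subfield of `K` generated by a subset `s` of `K`:
the supremum of the cardinalities of subsets of `s` that are algebraically
independent over ℚ. -/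
def tdSet (s : Set K) : Cardinal :=
  ⨆ t : {t : Set K // t ⊆ s ∧ AlgebraicIndependent ℚ ((↑) : t → K)}, Cardinal.mk t.1

/-- The transcendence degree over ℚ of the subfield of `K` generated by a subgroup of `Kˣ`. -/
def td (S : Subgroup Kˣ) : Cardinal := tdSet (Units.val '' (S : Set Kˣ))

/-- The predimension `δ(S) = 2·td(S) − rk(S ∩ G)` (with respect to the subgroup `G`
of green points). -/
def delta (G S : Subgroup Kˣ) : ℤ :=
  2 * ((td S).toNat : ℤ) - ((grpRank (S ⊓ G)).toNat : ℤ)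

/-- `Y` is strong in `T` (with respect to `G`): `δ(W) ≥ δ(Y)` for every finite-rank
subgroup `W` with `Y ⊆ W ⊆ T`. -/
def StrongIn (G Y T : Subgroup Kˣ) : Prop :=
  ∀ W : Subgroup Kˣ, FiniteRank W → Y ≤ W → W ≤ T → delta G Y ≤ delta G W

/-- `Y` is strong: strong in `Kˣ`. -/
def Strong (G Y : Subgroup Kˣ) : Prop := StrongIn G Y ⊤

/-- A subgroup `S` of `Kˣ` is root-closed: `x ∈ S` whenever `x^n ∈ S` for some `n ≥ 1`. -/
def RootClosed (S : Subgroup Kˣ) : Prop :=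
  ∀ (x : Kˣ) (n : ℕ), 1 ≤ n → x ^ n ∈ S → x ∈ S

/-- The subfield of `K` generated by a subgroup of `Kˣ`. -/
def fieldOf (S : Subgroup Kˣ) : Subfield K := Subfield.closure (Units.val '' (S : Set Kˣ))

end GreenPoints

section GroupRank

variable {M : Type*} [CommGroup M]

theorem Subgroup.rank_additive_eq_rank_toIntSubmodule (S : Subgroup M) :
    Module.rank ℤ (Additive S) = Module.rank ℤ (AddSubgroup.toIntSubmodule S.toAddSubgroup) :=
  (AddEquiv.refl (Additive S)).toIntLinearEquiv.rank_eq

theorem Subgroup.rank_additive_mono {S T : Subgroup M} (h : S ≤ T) :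
    Module.rank ℤ (Additive S) ≤ Module.rank ℤ (Additive T) := by
  simpa only [Subgroup.rank_additive_eq_rank_toIntSubmodule] using
    Submodule.rank_mono (by simpa using h)

theorem Subgroup.rank_additive_sup_add_inf (S T : Subgroup M) :
    Module.rank ℤ (Additive ↥(S ⊔ T)) + Module.rank ℤ (Additive ↥(S ⊓ T)) =
      Module.rank ℤ (Additive S) + Module.rank ℤ (Additive T) := by
  simp only [Subgroup.rank_additive_eq_rank_toIntSubmodule]
  rw [OrderIso.map_sup, OrderIso.map_sup, OrderIso.map_inf, OrderIso.map_inf]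
  exact Submodule.rank_sup_add_rank_inf_eq _ _

theorem Subgroup.rank_additive_closure_lt_aleph0 {s : Set M} (hs : s.Finite) :
    Module.rank ℤ (Additive (Subgroup.closure s)) < Cardinal.aleph0 := by
  have := hs.to_subtype
  have : Module.Finite ℤ (Additive (Subgroup.closure s)) :=
    Module.Finite.iff_addGroup_fg.2 inferInstance
  exact Module.rank_lt_aleph0 ℤ _

end GroupRank

theorem Cardinal.toNat_add_le_toNat_add {a b c d : Cardinal} (h : a + b ≤ c + d)
    (hc : c < Cardinal.aleph0) (hd : d < Cardinal.aleph0) :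
    a.toNat + b.toNat ≤ c.toNat + d.toNat := by
  have hab : a + b < Cardinal.aleph0 := h.trans_lt (Cardinal.add_lt_aleph0 hc hd)
  rw [← Cardinal.toNat_add (le_self_add.trans_lt hab) (le_add_self.trans_lt hab),
    ← Cardinal.toNat_add hc hd]
  exact Cardinal.toNat_le_toNat h (Cardinal.add_lt_aleph0 hc hd)

theorem AlgebraicIndependent.linearIndependent_ofMul {ι R A : Type*} [CommRing R]
    [Nontrivial R] [CommRing A] [Algebra R A] {x : ι → Aˣ}
    (hx : AlgebraicIndependent R fun i => (x i : A)) :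
    LinearIndependent ℤ fun i => Additive.ofMul (x i) := by
  set v : ι → Additive Aˣ := fun i => Additive.ofMul (x i)
  have aeval_monomial_eq : ∀ c : ι →₀ ℕ,
      MvPolynomial.aeval (R := R) (fun i => (x i : A)) (MvPolynomial.monomial c 1) =
        ((Additive.toMul (Finsupp.linearCombination ℤ v (c.mapRange Nat.cast Nat.cast_zero)) :
          Aˣ) : A) := by
    intro c
    simp [MvPolynomial.aeval_monomial, Finsupp.linearCombination_apply, Finsupp.prod,
      Finsupp.sum, v, Finsupp.support_mapRange_of_injective _ _ Nat.cast_injective]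
  rw [linearIndependent_iff]
  intro l hl
  set p : ι →₀ ℕ := l.mapRange Int.toNat rfl
  set n : ι →₀ ℕ := (-l).mapRange Int.toNat rfl
  have hl_eq : l = p.mapRange Nat.cast Nat.cast_zero - n.mapRange Nat.cast Nat.cast_zero := by
    ext i
    simp [p, n]
  -- a relation `∏ xᵢ ^ lᵢ = 1` equates the monomials `x ^ l⁺` and `x ^ l⁻`
  have hpn : p = n := by
    rw [hl_eq, map_sub, sub_eq_zero] at hl
    refine MvPolynomial.monomial_left_injective one_ne_zero
      (algebraicIndependent_iff_injective_aeval.1 hx ?_)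
    simp only [aeval_monomial_eq, hl]
  rw [hl_eq, hpn, sub_self]

namespace GreenPoints

variable {K : Type*} [Field K]

theorem FiniteRank.mono {S T : Subgroup Kˣ} (hT : FiniteRank T) (h : S ≤ T) : FiniteRank S :=
  (Subgroup.rank_additive_mono h).trans_lt hT

theorem FiniteRank.sup {S T : Subgroup Kˣ} (hS : FiniteRank S) (hT : FiniteRank T) :
    FiniteRank (S ⊔ T) :=
  calc grpRank (S ⊔ T) ≤ grpRank (S ⊔ T) + grpRank (S ⊓ T) := le_self_add
    _ = grpRank S + grpRank T := Subgroup.rank_additive_sup_add_inf S T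
    _ < Cardinal.aleph0 := Cardinal.add_lt_aleph0 hS hT

theorem grpRank_inf_add_grpRank_inf_le (G W V : Subgroup Kˣ) :
    grpRank (W ⊓ G) + grpRank (V ⊓ G) ≤ grpRank ((W ⊔ V) ⊓ G) + grpRank ((W ⊓ V) ⊓ G) := by
  unfold grpRank
  rw [← Subgroup.rank_additive_sup_add_inf]
  refine add_le_add (Subgroup.rank_additive_mono ?_) (Subgroup.rank_additive_mono ?_)
  · exact sup_le (inf_le_inf_right G le_sup_left) (inf_le_inf_right G le_sup_right)
  · exact le_inf (inf_le_inf inf_le_left inf_le_left) (inf_le_left.trans inf_le_right)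

variable [CharZero K]

theorem tdSet_eq_cRk (s : Set K) : tdSet s = (AlgebraicIndependent.matroid ℚ K).cRk s := by
  rw [tdSet, Matroid.cRk, Matroid.cRank_eq_iSup_cardinalMk_indep]
  exact (Equiv.subtypeEquivRight fun t => by
    rw [Matroid.restrict_indep_iff, and_comm]; rfl).iSup_congr fun _ => rfl

theorem td_le_grpRank (S : Subgroup Kˣ) : td S ≤ grpRank S := by
  refine ciSup_le' fun ⟨t, hts, ht⟩ => ?_
  choose u huS hu using fun z : t => hts z.2
  have hu_indep : AlgebraicIndependent ℚ fun z => ((u z : Kˣ) : K) := by simpa only [hu] using ht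
  have hli : LinearIndependent ℤ fun z => Additive.ofMul (⟨u z, huS z⟩ : S) :=
    .of_comp S.subtype.toAdditive.toIntLinearMap hu_indep.linearIndependent_ofMul
  exact hli.cardinal_le_rank

theorem FiniteRank.td_lt_aleph0 {S : Subgroup Kˣ} (hS : FiniteRank S) :
    td S < Cardinal.aleph0 :=
  (td_le_grpRank S).trans_lt hS

theorem val_image_sup_subset_closure (W V : Subgroup Kˣ) :
    Units.val '' ((W ⊔ V : Subgroup Kˣ) : Set Kˣ) ⊆
      (AlgebraicIndependent.matroid ℚ K).closure
        (Units.val '' (W : Set Kˣ) ∪ Units.val '' (V : Set Kˣ)) := by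
  rintro _ ⟨u, hu, rfl⟩
  obtain ⟨w, hw, v, hv, rfl⟩ := Subgroup.mem_sup.1 hu
  have hwv : ((w * v : Kˣ) : K) ∈
      Algebra.adjoin ℚ (Units.val '' (W : Set Kˣ) ∪ Units.val '' (V : Set Kˣ)) := by
    rw [Units.val_mul]
    exact mul_mem (Algebra.subset_adjoin (Or.inl ⟨w, hw, rfl⟩))
      (Algebra.subset_adjoin (Or.inr ⟨v, hv, rfl⟩))
  rw [AlgebraicIndependent.matroid_closure_eq, SetLike.mem_coe, Subalgebra.mem_algebraicClosure]
  exact isAlgebraic_algebraMap (⟨_, hwv⟩ : Algebra.adjoin ℚ _)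

theorem td_sup (W V : Subgroup Kˣ) :
    td (W ⊔ V) = (AlgebraicIndependent.matroid ℚ K).cRk
      (Units.val '' (W : Set Kˣ) ∪ Units.val '' (V : Set Kˣ)) := by
  rw [td, tdSet_eq_cRk]
  refine Matroid.cRk_closure_congr
    (((AlgebraicIndependent.matroid ℚ K).closure_subset_closure_of_subset_closure
      (val_image_sup_subset_closure W V)).antisymm
      ((AlgebraicIndependent.matroid ℚ K).closure_subset_closure (Set.union_subset ?_ ?_))) <;>
  exact Set.image_mono (by simp)

theorem td_inf (W V : Subgroup Kˣ) :
    td (W ⊓ V) = (AlgebraicIndependent.matroid ℚ K).cRk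
      (Units.val '' (W : Set Kˣ) ∩ Units.val '' (V : Set Kˣ)) := by
  rw [td, tdSet_eq_cRk, Subgroup.coe_inf, Set.image_inter Units.val_injective]

theorem td_sup_add_td_inf_le (W V : Subgroup Kˣ) : td (W ⊔ V) + td (W ⊓ V) ≤ td W + td V := by
  rw [td_sup, td_inf, add_comm, td, td, tdSet_eq_cRk, tdSet_eq_cRk]
  exact Matroid.cRk_inter_add_cRk_union_le ..

theorem delta_sup_add_delta_inf_le (G : Subgroup Kˣ) {W V : Subgroup Kˣ} (hW : FiniteRank W)
    (hV : FiniteRank V) : delta G (W ⊔ V) + delta G (W ⊓ V) ≤ delta G W + delta G V := by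
  have htd := Cardinal.toNat_add_le_toNat_add (td_sup_add_td_inf_le W V) hW.td_lt_aleph0
    hV.td_lt_aleph0
  have hrk := Cardinal.toNat_add_le_toNat_add (grpRank_inf_add_grpRank_inf_le G W V)
    ((hW.sup hV).mono inf_le_left) (hW.mono (inf_le_left.trans inf_le_left))
  unfold delta
  omega

def deltaValues (G X₀ : Subgroup Kˣ) (S : Set Kˣ) : Set ℤ :=
  {n : ℤ | ∃ W : Subgroup Kˣ, FiniteRank W ∧ X₀ ≤ W ∧ S ⊆ (W : Set Kˣ) ∧ delta G W = n}

/-- A junk value unless `X₀` is strong of finite rank and `S` is finite (`sInf` of an empty or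
unbounded set of integers is `0`). -/
def dim (G X₀ : Subgroup Kˣ) (S : Set Kˣ) : ℤ := sInf (deltaValues G X₀ S)

section Dim

variable {G X₀ : Subgroup Kˣ}

theorem deltaValues_nonempty (hX₀ : FiniteRank X₀) {S : Set Kˣ} (hS : S.Finite) :
    (deltaValues G X₀ S).Nonempty :=
  ⟨_, X₀ ⊔ Subgroup.closure S, hX₀.sup (Subgroup.rank_additive_closure_lt_aleph0 hS),
    le_sup_left, Subgroup.subset_closure.trans (SetLike.coe_subset_coe.2 le_sup_right), rfl⟩

theorem deltaValues_bddBelow (hX₀ : Strong G X₀) (S : Set Kˣ) :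
    BddBelow (deltaValues G X₀ S) :=
  ⟨delta G X₀, by rintro _ ⟨W, hW, hX₀W, -, rfl⟩; exact hX₀ W hW hX₀W le_top⟩

theorem isLeast_dim (hX₀ : FiniteRank X₀) (hX₀s : Strong G X₀) {S : Set Kˣ} (hS : S.Finite) :
    IsLeast (deltaValues G X₀ S) (dim G X₀ S) :=
  ⟨Int.csInf_mem (deltaValues_nonempty hX₀ hS) (deltaValues_bddBelow hX₀s S),
    fun _ hn => csInf_le (deltaValues_bddBelow hX₀s S) hn⟩

theorem dim_mono (hX₀ : FiniteRank X₀) (hX₀s : Strong G X₀) {S T : Set Kˣ} (hT : T.Finite)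
    (hST : S ⊆ T) : dim G X₀ S ≤ dim G X₀ T :=
  csInf_le_csInf (deltaValues_bddBelow hX₀s S) (deltaValues_nonempty hX₀ hT)
    fun _ ⟨W, hW, hX₀W, hTW, hn⟩ => ⟨W, hW, hX₀W, hST.trans hTW, hn⟩

theorem dim_union_le_of_dim_eq (hX₀ : FiniteRank X₀) (hX₀s : Strong G X₀) {X Y Z : Set Kˣ}
    (hX : X.Finite) (hY : Y.Finite) (hZ : Z.Finite) (h : dim G X₀ (X ∪ Y) = dim G X₀ Y) :
    dim G X₀ (X ∪ Y ∪ Z) ≤ dim G X₀ (Y ∪ Z) := by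
  obtain ⟨W, hW, hX₀W, hXYW, hδW⟩ := (isLeast_dim hX₀ hX₀s (hX.union hY)).1
  obtain ⟨V, hV, hX₀V, hYZV, hδV⟩ := (isLeast_dim hX₀ hX₀s (hY.union hZ)).1
  have hinf : dim G X₀ Y ≤ delta G (W ⊓ V) := (isLeast_dim hX₀ hX₀s hY).2
    ⟨W ⊓ V, hW.mono inf_le_left, le_inf hX₀W hX₀V,
      fun y hy => ⟨hXYW (Or.inr hy), hYZV (Or.inl hy)⟩, rfl⟩
  have hsup : dim G X₀ (X ∪ Y ∪ Z) ≤ delta G (W ⊔ V) :=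
    (isLeast_dim hX₀ hX₀s ((hX.union hY).union hZ)).2
    ⟨W ⊔ V, hW.sup hV, hX₀W.trans le_sup_left,
      Set.union_subset (hXYW.trans (SetLike.coe_subset_coe.2 le_sup_left))
        (Set.subset_union_right.trans (hYZV.trans (SetLike.coe_subset_coe.2 le_sup_right))), rfl⟩
  have := delta_sup_add_delta_inf_le G hW hV
  omega

end Dim

/-- The dimension function associated to the predimension `δ`: assuming there is a
finite-rank strong subgroup `X₀` of `Kˣ`, there is a function `d` on finite subsets
`S` of `Kˣ` such that `d S` is the minimum of `{δ(W) : W finite-rank subgroup, X₀ ∪ S ⊆ W}`,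
and `d` satisfies the exchange-type closure axiom:
if `d(X ∪ Y) = d(Y)` then `d(X ∪ Y ∪ Z) = d(Y ∪ Z)`. -/
theorem dimension_function_exists {K : Type*} [Field K] [CharZero K] (G X₀ : Subgroup Kˣ)
    (hX₀fr : FiniteRank X₀) (hX₀s : Strong G X₀) :
    ∃ d : Set Kˣ → ℤ,
      (∀ S : Set Kˣ, S.Finite →
        IsLeast {n : ℤ | ∃ W : Subgroup Kˣ,
          FiniteRank W ∧ X₀ ≤ W ∧ S ⊆ (W : Set Kˣ) ∧ delta G W = n} (d S)) ∧
      (∀ X Y Z : Set Kˣ, X.Finite → Y.Finite → Z.Finite →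
        d (X ∪ Y) = d Y → d (X ∪ Y ∪ Z) = d (Y ∪ Z)) :=
  ⟨dim G X₀, fun _ hS => isLeast_dim hX₀fr hX₀s hS, fun _ _ _ hX hY hZ h =>
    (dim_union_le_of_dim_eq hX₀fr hX₀s hX hY hZ h).antisymm
      (dim_mono hX₀fr hX₀s ((hX.union hY).union hZ)
        (Set.union_subset_union_left _ Set.subset_union_right))⟩

end GreenPoints

end
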